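/- Let μ be a reconciliation map from a gene tree (T,t,σ) to a species tree S on B. Then for all vertices x, y of T: (D1) if x is a leaf of T then μ(x) = σ(x); (D2.a) if μ(x) is a vertex of S then μ(x) = lca_S(σ(L(x))); (D2.b) if μ(x) is an edge [u,v] of S then lca_S(σ(L(x))) is strictly below μ(x), i.e. lca_S(σ(L(x))) ≼_S v and lca_S(σ(L(x))) ≠ u; (D3) if x ≺_T y then μ(x) ≼_S μ(y) in the extended order, and moreover μ(x) ≺_S μ(y) unless both μ(x) and μ(y) are edges of S. -/
import Mathlib


/-- Event labels for the vertices of a gene tree: speciation `•`,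
duplication `□`, and extant gene (leaf) `⊙`. -/
inductive Event : Type
  | spec : Event
  | dup : Event
  | leaf : Event
deriving DecidableEq

/-- A rooted tree structure on a partially ordered set: there is a greatest
element (the root) and the set of ancestors of every element is a chain.
(Finiteness is imposed via a `Fintype` instance.) -/
def IsRootedTree (V : Type*) [PartialOrder V] : Prop :=
  (∃ ρ : V, IsTop ρ) ∧ ∀ x : V, IsChain (· ≤ ·) {y : V | x ≤ y}

/-- `L(x)`: the set of leaves (minimal elements) lying below `x`. -/
def leavesBelow {V : Type*} [PartialOrder V] (x : V) : Set V :=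
  {y : V | IsMin y ∧ y ≤ x}

/-- A phylogenetic tree: a rooted tree in which every non-leaf vertex covers
at least two vertices. -/
def IsPhyloTree (V : Type*) [PartialOrder V] : Prop :=
  IsRootedTree V ∧ ∀ x : V, ¬ IsMin x → ∃ c c' : V, c ≠ c' ∧ c ⋖ x ∧ c' ⋖ x

/-- A species tree: a rooted tree whose root covers exactly one vertex and in
which every non-leaf vertex other than the root covers at least two vertices. -/
def IsSpeciesTree (W : Type*) [PartialOrder W] : Prop :=
  IsRootedTree W ∧
  (∀ ρ : W, IsTop ρ → ∃! v : W, v ⋖ ρ) ∧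
  (∀ x : W, ¬ IsMin x → ¬ IsTop x → ∃ c c' : W, c ≠ c' ∧ c ⋖ x ∧ c' ⋖ x)

/-- A rooted tree (on its vertex type) displays the triple `((a,b),c)`, i.e.
`lca(a,b) ≺ lca({a,b,c})`. -/
def Displays {W : Type*} [PartialOrder W] (a b c : W) : Prop :=
  ∃ w₁ w₂ : W, IsLUB ({a, b} : Set W) w₁ ∧ IsLUB ({a, b, c} : Set W) w₂ ∧ w₁ < w₂

/-- Condition (C): the sets of species below distinct children of a
speciation vertex are disjoint. -/
def CondC {V B : Type*} [PartialOrder V] (t : V → Event) (σ : V → B) : Prop :=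
  ∀ z c c' : V, t z = Event.spec → c ⋖ z → c' ⋖ z → c ≠ c' →
    σ '' leavesBelow c ∩ σ '' leavesBelow c' = ∅

/-- `(T,t,σ)` is a gene tree over the (abstract) species set `B`:
`T` is a phylogenetic tree with at least three leaves, `t` labels exactly the
leaves with `⊙`, `σ` maps the leaves onto `B`, and condition (C) holds. -/
def IsGeneTree {V B : Type*} [PartialOrder V] (t : V → Event) (σ : V → B) : Prop :=
  IsPhyloTree V ∧ 3 ≤ {x : V | IsMin x}.ncard ∧
  (∀ x : V, t x = Event.leaf ↔ IsMin x) ∧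
  (∀ b : B, ∃ x : V, IsMin x ∧ σ x = b) ∧
  CondC t σ

/-- `(T,t,σ)` is a gene tree whose species set `B` is the leaf set of the
species tree with vertex set `W`: `σ` maps the leaves of `T` onto the leaves
of `W`. -/
def IsGeneTreeOver {V W : Type*} [PartialOrder V] [PartialOrder W]
    (t : V → Event) (σ : V → W) : Prop :=
  IsPhyloTree V ∧ 3 ≤ {x : V | IsMin x}.ncard ∧
  (∀ x : V, t x = Event.leaf ↔ IsMin x) ∧
  (∀ x : V, IsMin x → IsMin (σ x)) ∧
  (∀ b : W, IsMin b → ∃ x : V, IsMin x ∧ σ x = b) ∧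
  CondC t σ

/-- The edges `[u,v]` of a species tree: pairs whose first component `u`
covers the second component `v` (so `.1` is the upper and `.2` the lower
endpoint of the edge). -/
abbrev SEdge (W : Type*) [PartialOrder W] : Type _ := {p : W × W // p.2 ⋖ p.1}

/-- The (non-strict) extension `≼` of the species-tree order to `W ∪ H`. -/
def extLE {W : Type*} [PartialOrder W] : W ⊕ SEdge W → W ⊕ SEdge W → Prop
  | Sum.inl x, Sum.inl y => x ≤ y
  | Sum.inl x, Sum.inr e => x ≤ e.1.2
  | Sum.inr e, Sum.inl y => e.1.1 ≤ y
  | Sum.inr e, Sum.inr f => e.1.2 ≤ f.1.2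

/-- The strict extension `≺` of the species-tree order to `W ∪ H`. -/
def extLT {W : Type*} [PartialOrder W] : W ⊕ SEdge W → W ⊕ SEdge W → Prop
  | Sum.inl x, Sum.inl y => x < y
  | Sum.inl x, Sum.inr e => x ≤ e.1.2
  | Sum.inr e, Sum.inl y => e.1.1 ≤ y
  | Sum.inr e, Sum.inr f => e.1.2 < f.1.2

/-- `μ` is a reconciliation map from the gene tree `(T,t,σ)` to the species
tree on `W` (with edge set `SEdge W`); the leaves of `W` play the role of the
species set `B`. -/
def IsReconMap {V W : Type*} [PartialOrder V] [PartialOrder W]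
    (t : V → Event) (σ : V → W) (μ : V → W ⊕ SEdge W) : Prop :=
  (∀ x : V, t x = Event.leaf → μ x = Sum.inl (σ x)) ∧
  (∀ x : V, t x = Event.spec → ∃ w : W, ¬ IsMin w ∧ μ x = Sum.inl w) ∧
  (∀ x : V, t x = Event.dup → ∃ e : SEdge W, μ x = Sum.inr e) ∧
  (∀ x y : V, x < y → t x = Event.dup → t y = Event.dup → extLE (μ x) (μ y)) ∧
  (∀ x y : V, x < y → ¬ (t x = Event.dup ∧ t y = Event.dup) →
    extLT (μ x) (μ y)) ∧
  (∀ x : V, t x = Event.spec →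
    ∃ w : W, IsLUB (σ '' leavesBelow x) w ∧ μ x = Sum.inl w)

/-- Membership of the triple `((x,y),z)` in `𝔊(T,t,σ)`: a triple of leaves
displayed by `T`, rooted in a speciation vertex, whose species are pairwise
distinct. -/
def TripleInG {V B : Type*} [PartialOrder V] (t : V → Event) (σ : V → B)
    (x y z : V) : Prop :=
  IsMin x ∧ IsMin y ∧ IsMin z ∧
  (∃ w₁ w₂ : V, IsLUB ({x, y} : Set V) w₁ ∧ IsLUB ({x, y, z} : Set V) w₂ ∧
    w₁ < w₂ ∧ t w₂ = Event.spec) ∧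
  σ x ≠ σ y ∧ σ y ≠ σ z ∧ σ x ≠ σ z

/-- Lemma, axioms (D1)–(D3).  If `μ` is a reconciliation map
from the gene tree `(T,t,σ)` to the species tree `S` on `B` (the leaf set of
`W`), then (D1) leaves are mapped to their species, (D2.a) if `μ x` is a
vertex then it is `lca_S(σ(L(x)))`, (D2.b) if `μ x` is an edge `[u,v]` then
`lca_S(σ(L(x))) ≼ v` and `lca_S(σ(L(x))) ≠ u`, and (D3) if `x ≺_T y` then
`μ x ≼_S μ y`, and moreover `μ x ≺_S μ y` unless both images are edges. -/
theorem reconciliation_map_axioms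
    {V W : Type*} [PartialOrder V] [Fintype V] [PartialOrder W] [Fintype W]
    (t : V → Event) (σ : V → W) (μ : V → W ⊕ SEdge W)
    (hT : IsGeneTreeOver t σ) (hS : IsSpeciesTree W)
    (hμ : IsReconMap t σ μ) :
    (∀ x : V, IsMin x → μ x = Sum.inl (σ x)) ∧
    (∀ x : V, ∀ w : W, μ x = Sum.inl w → IsLUB (σ '' leavesBelow x) w) ∧
    (∀ x : V, ∀ e : SEdge W, μ x = Sum.inr e →
      ∀ w : W, IsLUB (σ '' leavesBelow x) w → w ≤ e.1.2 ∧ w ≠ e.1.1) ∧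
    (∀ x y : V, x < y →
      extLE (μ x) (μ y) ∧
      (¬ ((∃ e : SEdge W, μ x = Sum.inr e) ∧ (∃ f : SEdge W, μ y = Sum.inr f)) →
        extLT (μ x) (μ y))) := by
  obtain ⟨hphylo, hcard, hleaf, hmin, hsurj, hC⟩ := hT
  obtain ⟨h1, h2, h3, h4, h5, h6⟩ := hμ
  have extLT_le : ∀ a b : W ⊕ SEdge W, extLT a b → extLE a b := by
    rintro (a|a) (b|b) h <;> simp only [extLT, extLE] at * <;>
      first | exact h.le | exact h
  refine ⟨?_, ?_, ?_, ?_⟩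
  · intro x hx
    exact h1 x ((hleaf x).mpr hx)
  · intro x w hw
    rcases hx : t x with _ | _ | _
    · obtain ⟨w', hlub, heq⟩ := h6 x hx
      rw [heq] at hw
      injection hw with hw
      exact hw ▸ hlub
    · obtain ⟨e, heq⟩ := h3 x hx
      rw [heq] at hw
      cases hw
    · have hxmin : IsMin x := (hleaf x).mp hx
      have hL : leavesBelow x = {x} := by
        ext y
        constructor
        · rintro ⟨hy, hyx⟩
          exact le_antisymm hyx (hxmin hyx)
        · rintro rfl
          exact ⟨hxmin, le_rfl⟩
      rw [h1 x hx] at hw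
      injection hw with hw
      rw [hL, Set.image_singleton, hw]
      exact isLUB_singleton
  · intro x e he w hw
    have hne : t x ≠ Event.leaf := by
      intro h
      rw [h1 x h] at he
      cases he
    have hxmin : ¬ IsMin x := fun h => hne ((hleaf x).mpr h)
    have hub : e.1.2 ∈ upperBounds (σ '' leavesBelow x) := by
      rintro _ ⟨z, ⟨hzmin, hzx⟩, rfl⟩
      have hzlt : z < x := lt_of_le_of_ne hzx (fun h => hxmin (h ▸ hzmin))
      have hL := h5 z x hzlt (fun hd => by
        rw [(hleaf z).mpr hzmin] at hd
        cases hd.1)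
      rw [h1 z ((hleaf z).mpr hzmin), he] at hL
      exact hL
    have hwv : w ≤ e.1.2 := hw.2 hub
    refine ⟨hwv, fun h => ?_⟩
    exact absurd (h ▸ hwv) (e.2.lt.not_ge)
  · intro x y hxy
    by_cases hd : t x = Event.dup ∧ t y = Event.dup
    · exact ⟨h4 x y hxy hd.1 hd.2, fun hne => absurd ⟨h3 x hd.1, h3 y hd.2⟩ hne⟩
    · have hlt := h5 x y hxy hd
      exact ⟨extLT_le _ _ hlt, fun _ => hlt⟩
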